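/- Let p₁, p₂, p₃ be real numbers with p₁ + p₂ + p₃ = 1. The map Φ_p is positive (i.e. Φ_p(A) is positive semidefinite whenever A ∈ M₂(ℂ) is positive semidefinite) if and only if |pₖ| ≤ 1 for k = 1, 2, 3. -/

import Mathlib

open Matrix
open scoped ComplexOrder

/-- The three Pauli matrices in `M₂(ℂ)`. -/
def pauli : Fin 3 → Matrix (Fin 2) (Fin 2) ℂ
  | 0 => !![0, 1; 1, 0]
  | 1 => !![0, -Complex.I; Complex.I, 0]
  | 2 => !![1, 0; 0, -1]

/-- The unital linear map `Φ_p` with `Φ_p(I) = I` and `Φ_p(σₖ) = pₖ σₖ`, given by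
`Φ_p(X) = ½ Tr(X) I + ½ Σₖ pₖ Tr(σₖ X) σₖ`. -/
noncomputable def PhiP (p : Fin 3 → ℝ) (X : Matrix (Fin 2) (Fin 2) ℂ) :
    Matrix (Fin 2) (Fin 2) ℂ :=
  (1 / 2 : ℂ) • (X.trace • (1 : Matrix (Fin 2) (Fin 2) ℂ)
    + ∑ k, ((p k : ℂ) * (pauli k * X).trace) • pauli k)

/-! Write a Hermitian `2 × 2` matrix in Bloch form `t • 1 + ∑ rₖ • σₖ`. The Pauli matrices are
traceless and orthogonal for the trace form, so `Φ_p` keeps `t` and multiplies `r` coordinatewise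
by `p`. A Bloch matrix has trace `2t` and determinant `t² - ‖r‖²`, so it is positive semidefinite
iff `‖r‖ ≤ t`. Hence `Φ_p` is positive iff the ellipsoid with semi-axes `|pₖ|` lies in the unit
ball. -/

theorem Matrix.IsHermitian.posSemidef_iff_trace_nonneg_and_det_nonneg {𝕜 : Type*} [RCLike 𝕜]
    {A : Matrix (Fin 2) (Fin 2) 𝕜} (hA : A.IsHermitian) :
    A.PosSemidef ↔ 0 ≤ A.trace ∧ 0 ≤ A.det := by
  refine ⟨fun h ↦ ⟨h.trace_nonneg, h.det_nonneg⟩, fun ⟨htr, hdet⟩ ↦ ?_⟩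
  rw [hA.trace_eq_sum_eigenvalues, Fin.sum_univ_two, ← RCLike.ofReal_add,
    RCLike.ofReal_nonneg] at htr
  rw [hA.det_eq_prod_eigenvalues, Fin.prod_univ_two, ← RCLike.ofReal_mul,
    RCLike.ofReal_nonneg] at hdet
  rw [hA.posSemidef_iff_eigenvalues_nonneg]
  intro i
  fin_cases i <;> simp <;> nlinarith

lemma trace_pauli (k : Fin 3) : (pauli k).trace = 0 := by
  fin_cases k <;> simp [pauli, trace_fin_two]

lemma trace_pauli_mul_pauli (j k : Fin 3) :
    (pauli j * pauli k).trace = if j = k then 2 else 0 := by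
  fin_cases j <;> fin_cases k <;> simp [pauli, trace_fin_two] <;> norm_num

noncomputable def blochMatrix (t : ℝ) (r : Fin 3 → ℝ) : Matrix (Fin 2) (Fin 2) ℂ :=
  (t : ℂ) • 1 + ∑ k, (r k : ℂ) • pauli k

lemma blochMatrix_eq_of (t : ℝ) (r : Fin 3 → ℝ) :
    blochMatrix t r =
      !![(t + r 2 : ℂ), r 0 - r 1 * Complex.I; r 0 + r 1 * Complex.I, t - r 2] := by
  ext i j
  fin_cases i <;> fin_cases j <;> simp [blochMatrix, pauli, Fin.sum_univ_three] <;> ring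

lemma Matrix.IsHermitian.exists_eq_blochMatrix {A : Matrix (Fin 2) (Fin 2) ℂ}
    (hA : A.IsHermitian) : ∃ t r, A = blochMatrix t r := by
  refine ⟨(A 0 0 + A 1 1).re / 2, ![(A 1 0).re, (A 1 0).im, (A 0 0 - A 1 1).re / 2], ?_⟩
  have h00 := hA.apply 0 0
  have h11 := hA.apply 1 1
  have h01 := hA.apply 0 1
  simp only [Complex.star_def, Complex.ext_iff, Complex.conj_re, Complex.conj_im] at h00 h11 h01
  rw [blochMatrix_eq_of]
  ext i j
  fin_cases i <;> fin_cases j <;> simp [Complex.ext_iff] <;> grind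

lemma isHermitian_blochMatrix (t : ℝ) (r : Fin 3 → ℝ) : (blochMatrix t r).IsHermitian := by
  rw [blochMatrix_eq_of]
  ext i j
  fin_cases i <;> fin_cases j <;> simp [Complex.ext_iff]

lemma trace_blochMatrix (t : ℝ) (r : Fin 3 → ℝ) : (blochMatrix t r).trace = 2 * t := by
  simp [blochMatrix, trace_pauli, mul_comm]

lemma trace_pauli_mul_blochMatrix (k : Fin 3) (t : ℝ) (r : Fin 3 → ℝ) :
    (pauli k * blochMatrix t r).trace = 2 * r k := by
  simp [blochMatrix, mul_add, Finset.mul_sum, trace_pauli, trace_pauli_mul_pauli, mul_comm]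

lemma det_blochMatrix (t : ℝ) (r : Fin 3 → ℝ) :
    (blochMatrix t r).det = (t ^ 2 - ∑ k, r k ^ 2 : ℝ) := by
  rw [blochMatrix_eq_of, det_fin_two_of, Fin.sum_univ_three]
  push_cast
  ring_nf
  simp [Complex.I_sq]
  ring

lemma blochMatrix_posSemidef_iff (t : ℝ) (r : Fin 3 → ℝ) :
    (blochMatrix t r).PosSemidef ↔ 0 ≤ t ∧ ∑ k, r k ^ 2 ≤ t ^ 2 := by
  rw [(isHermitian_blochMatrix t r).posSemidef_iff_trace_nonneg_and_det_nonneg,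
    trace_blochMatrix, det_blochMatrix, Complex.zero_le_real]
  norm_cast
  constructor <;> rintro ⟨h1, h2⟩ <;> constructor <;> linarith

lemma PhiP_blochMatrix (p : Fin 3 → ℝ) (t : ℝ) (r : Fin 3 → ℝ) :
    PhiP p (blochMatrix t r) = blochMatrix t (p * r) := by
  simp only [PhiP, trace_blochMatrix, trace_pauli_mul_blochMatrix]
  simp only [blochMatrix, smul_add, Finset.smul_sum, smul_smul, Pi.mul_apply]
  congr 1
  · congr 1
    ring
  · refine Finset.sum_congr rfl fun k _ ↦ ?_
    push_cast
    ring_nf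

theorem stmt_9_general (p : Fin 3 → ℝ) :
    (∀ A : Matrix (Fin 2) (Fin 2) ℂ, A.PosSemidef → (PhiP p A).PosSemidef) ↔
      (∀ k, |p k| ≤ 1) := by
  constructor
  · intro hpos k
    have hσ : (blochMatrix 1 (Pi.single k 1)).PosSemidef :=
      (blochMatrix_posSemidef_iff _ _).2 ⟨zero_le_one, by simp [Pi.single_apply, ite_pow]⟩
    have h := hpos _ hσ
    rw [PhiP_blochMatrix, blochMatrix_posSemidef_iff] at h
    rw [← sq_le_one_iff_abs_le_one]
    simpa [Pi.single_apply] using h.2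
  · intro hp A hA
    obtain ⟨t, r, rfl⟩ := hA.isHermitian.exists_eq_blochMatrix
    rw [blochMatrix_posSemidef_iff] at hA
    rw [PhiP_blochMatrix, blochMatrix_posSemidef_iff]
    refine ⟨hA.1, le_trans (Finset.sum_le_sum fun k _ ↦ ?_) hA.2⟩
    rw [Pi.mul_apply, mul_pow]
    exact mul_le_of_le_one_left (sq_nonneg _) ((sq_le_one_iff_abs_le_one _).2 (hp k))

/-- for `p₁ + p₂ + p₃ = 1`, the map `Φ_p` is positive iff
`|pₖ| ≤ 1` for `k = 1, 2, 3`. -/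
theorem stmt_9 (p : Fin 3 → ℝ) (hsum : p 0 + p 1 + p 2 = 1) :
    (∀ A : Matrix (Fin 2) (Fin 2) ℂ, A.PosSemidef → (PhiP p A).PosSemidef) ↔
      (∀ k, |p k| ≤ 1) :=
  stmt_9_general p
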